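/- Let G be a finitely generated residually finite group and let φ : G → G be a group endomorphism such that φ(G) has finite index in G. Then there exists a natural number n such that the subgroups φ^n(G) and φ^{n+1}(G) have finite index in G and the restriction of φ to φ^n(G) is an isomorphism onto φ^{n+1}(G). -/

import Mathlib

/-!
Write `R n = φⁿ(G)`. The preimages `(φⁿ)⁻¹(R (n+1)) = φ(G) · ker φⁿ` form an ascending chain of
subgroups containing the finite-index subgroup `φ(G)`, so they stabilise from some `n` on; from
then on `ker φ ∩ R m ≤ R (m+1)`, hence `ker φ ∩ R n` lies in every `R m`. A nontrivial `x` in it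
survives in some finite quotient `G ⧸ N`; since `G` is finitely generated there are only finitely
many homomorphisms `G → G ⧸ N`, so `π ∘ φⁱ = π ∘ φʲ` for some `i < j`, and writing `x = φⁱ y`
gives `π x = π (φʲ⁻ⁱ x) = 1` because `φ x = 1`, a contradiction.
-/

instance MonoidHom.finite_of_fg {M N : Type*} [Monoid M] [Monoid.FG M] [Monoid N] [Finite N] :
    Finite (M →* N) := by
  obtain ⟨S, hS, hSfin⟩ := Monoid.fg_iff.mp ‹Monoid.FG M›
  have := hSfin.to_subtype
  exact .of_injective (fun f (s : S) => f s) fun f g hfg =>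
    MonoidHom.eq_of_eqOn_denseM hS fun s hs => congrFun hfg ⟨s, hs⟩

theorem MonoidHom.finiteIndex_range_comp {G G' G'' : Type*} [Group G] [Group G'] [Group G'']
    (f : G' →* G'') (g : G →* G') [f.range.FiniteIndex] [g.range.FiniteIndex] :
    (f.comp g).range.FiniteIndex := by
  have : (g.range ⊔ f.ker).FiniteIndex := Subgroup.finiteIndex_of_le le_sup_left
  rw [range_comp]
  constructor
  rw [Subgroup.index_map]
  exact mul_ne_zero Subgroup.FiniteIndex.index_ne_zero Subgroup.FiniteIndex.index_ne_zero

theorem Subgroup.exists_forall_ge_eq_of_monotone {G : Type*} [Group G] {A : ℕ → Subgroup G}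
    (hA : Monotone A) [(A 0).FiniteIndex] : ∃ n, ∀ m, n ≤ m → A n = A m := by
  have hfin (n : ℕ) : (A n).FiniteIndex := finiteIndex_of_le (hA n.zero_le)
  obtain ⟨n, hn⟩ := WellFoundedLT.antitone_chain_condition (f := fun n => (A n).index)
    fun i j hij => index_antitone (hA hij)
  exact ⟨n, fun m hm => (hA hm).eq_of_not_lt fun hlt => (index_strictAnti hlt).ne' (hn m hm)⟩

namespace Monoid.End

variable {G : Type*} [Group G] (φ : Monoid.End G)

theorem coe_pow_zero : ((φ ^ 0 : Monoid.End G) : G →* G) = MonoidHom.id G := rfl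

theorem coe_pow_succ (n : ℕ) :
    ((φ ^ (n + 1) : Monoid.End G) : G →* G) = MonoidHom.comp (φ ^ n : Monoid.End G) φ :=
  pow_succ φ n

theorem coe_pow_succ' (n : ℕ) :
    ((φ ^ (n + 1) : Monoid.End G) : G →* G) = MonoidHom.comp φ (φ ^ n : Monoid.End G) :=
  pow_succ' φ n

theorem map_range_pow (n : ℕ) :
    ((φ ^ n : Monoid.End G) : G →* G).range.map (φ : G →* G) =
      ((φ ^ (n + 1) : Monoid.End G) : G →* G).range := by
  rw [coe_pow_succ']
  exact MonoidHom.map_range _ _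

theorem range_pow_antitone : Antitone fun n => ((φ ^ n : Monoid.End G) : G →* G).range :=
  antitone_nat_of_succ_le fun n => by
    rw [coe_pow_succ]
    exact (MonoidHom.range_comp _ _).trans_le (Subgroup.map_le_range _ _)

theorem finiteIndex_range_pow [(φ : G →* G).range.FiniteIndex] (n : ℕ) :
    ((φ ^ n : Monoid.End G) : G →* G).range.FiniteIndex := by
  induction n with
  | zero => rw [coe_pow_zero, MonoidHom.range_eq_top.2 Function.surjective_id]; infer_instance
  | succ n ih => rw [coe_pow_succ']; exact MonoidHom.finiteIndex_range_comp φ (φ ^ n)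

theorem pow_succ_apply' (n : ℕ) (x : G) : (φ ^ (n + 1)) x = φ ((φ ^ n) x) :=
  DFunLike.congr_fun (pow_succ' φ n) x

-- `Iff.rfl`, but it exposes `φ ^ n` with the `Monoid.End` coercion used by `pow_succ_apply'`.
theorem mem_range_pow {n : ℕ} {x : G} :
    x ∈ ((φ ^ n : Monoid.End G) : G →* G).range ↔ ∃ y, (φ ^ n) y = x :=
  Iff.rfl

theorem comap_range_pow_succ_monotone :
    Monotone fun n => (((φ ^ (n + 1) : Monoid.End G) : G →* G).range).comap
      ((φ ^ n : Monoid.End G) : G →* G) := by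
  refine monotone_nat_of_le_succ fun n x hx => ?_
  obtain ⟨y, hy⟩ := (mem_range_pow φ).1 hx
  exact (mem_range_pow φ).2
    ⟨y, (pow_succ_apply' φ _ y).trans ((congrArg φ hy).trans (pow_succ_apply' φ n x).symm)⟩

theorem ker_inf_range_pow_le_range_pow_succ {n : ℕ}
    (h : (((φ ^ (n + 2) : Monoid.End G) : G →* G).range).comap
        ((φ ^ (n + 1) : Monoid.End G) : G →* G) ≤
      (((φ ^ (n + 1) : Monoid.End G) : G →* G).range).comap ((φ ^ n : Monoid.End G) : G →* G)) :
    (φ : G →* G).ker ⊓ ((φ ^ n : Monoid.End G) : G →* G).range ≤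
      ((φ ^ (n + 1) : Monoid.End G) : G →* G).range := by
  rintro _ ⟨hx, hy⟩
  obtain ⟨y, rfl⟩ := (mem_range_pow φ).1 hy
  have hy1 : (φ ^ (n + 1)) y = 1 := (pow_succ_apply' φ n y).trans hx
  exact h ((mem_range_pow φ).2 ⟨1, (map_one _).trans hy1.symm⟩)

theorem exists_ker_inf_range_pow_le [(φ : G →* G).range.FiniteIndex] :
    ∃ n, ∀ m, (φ : G →* G).ker ⊓ ((φ ^ n : Monoid.End G) : G →* G).range ≤
      ((φ ^ m : Monoid.End G) : G →* G).range := by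
  have : ((((φ ^ 1 : Monoid.End G) : G →* G).range).comap
      ((φ ^ 0 : Monoid.End G) : G →* G)).FiniteIndex := by
    rw [pow_one, coe_pow_zero, Subgroup.comap_id]
    infer_instance
  obtain ⟨n, hn⟩ := Subgroup.exists_forall_ge_eq_of_monotone (comap_range_pow_succ_monotone φ)
  refine ⟨n, fun m => ?_⟩
  rcases le_total m n with hmn | hnm
  · exact inf_le_right.trans (range_pow_antitone φ hmn)
  induction m, hnm using Nat.le_induction with
  | base => exact inf_le_right
  | succ m hnm ih =>
    have hstable := (hn (m + 1) (by omega)).symm.trans (hn m hnm)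
    exact (le_inf inf_le_left ih).trans (ker_inf_range_pow_le_range_pow_succ φ hstable.le)

theorem map_eq_one_of_comp_pow_eq {Q : Type*} [Monoid Q] (f : G →* Q) {i j : ℕ} (hij : i < j)
    (hf : f.comp (φ ^ i : Monoid.End G) = f.comp (φ ^ j : Monoid.End G)) {x : G}
    (hx : x ∈ ((φ ^ i : Monoid.End G) : G →* G).range) (hφx : φ x = 1) : f x = 1 := by
  obtain ⟨k, rfl⟩ := Nat.exists_eq_add_of_lt hij
  obtain ⟨y, rfl⟩ := (mem_range_pow φ).1 hx
  have hsplit : (φ ^ (i + k + 1)) y = (φ ^ k) (φ ((φ ^ i) y)) := by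
    rw [show i + k + 1 = k + 1 + i by omega, pow_add, pow_succ]
    rfl
  calc f ((φ ^ i) y) = f ((φ ^ (i + k + 1)) y) := DFunLike.congr_fun hf y
    _ = 1 := by rw [hsplit, hφx, map_one, map_one]

theorem eq_one_of_forall_mem_range_pow [Group.FG G]
    (hres : ∀ x : G, x ≠ 1 → ∃ N : Subgroup G, N.Normal ∧ N.FiniteIndex ∧ x ∉ N) {x : G}
    (hx : ∀ n, x ∈ ((φ ^ n : Monoid.End G) : G →* G).range) (hφx : φ x = 1) : x = 1 := by
  by_contra hx1
  obtain ⟨N, hN, hNfin, hxN⟩ := hres x hx1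
  have : Finite (G ⧸ N) := N.finite_quotient_of_finiteIndex
  obtain ⟨i, j, hij, hF⟩ := Finite.exists_ne_map_eq_of_infinite
    fun k => (QuotientGroup.mk' N).comp (φ ^ k : Monoid.End G)
  have hxN' : (QuotientGroup.mk' N) x = 1 := by
    rcases hij.lt_or_gt with hlt | hlt
    · exact map_eq_one_of_comp_pow_eq φ _ hlt hF (hx i) hφx
    · exact map_eq_one_of_comp_pow_eq φ _ hlt hF.symm (hx j) hφx
  exact hxN ((QuotientGroup.eq_one_iff x).1 hxN')

end Monoid.End

/-- If `G` is a finitely generated residually finite group and `φ : G → G` is an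
endomorphism whose image has finite index in `G`, then there is an `n` such that
`φ^n(G)` and `φ^(n+1)(G)` have finite index in `G` and the restriction of `φ` to
`φ^n(G)` is an isomorphism onto `φ^(n+1)(G)` (it is injective on `φ^n(G)` and maps
`φ^n(G)` onto `φ^(n+1)(G)`). -/
theorem exists_iterate_range_finiteIndex_and_restriction_isomorphism
    (G : Type*) [Group G] [Group.FG G]
    (hres : ∀ x : G, x ≠ 1 → ∃ N : Subgroup G, N.Normal ∧ N.FiniteIndex ∧ x ∉ N)
    (φ : Monoid.End G) (hφ : (φ : G →* G).range.FiniteIndex) :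
    ∃ n : ℕ, ((φ ^ n : Monoid.End G) : G →* G).range.FiniteIndex ∧
      ((φ ^ (n + 1) : Monoid.End G) : G →* G).range.FiniteIndex ∧
      Set.InjOn φ (((φ ^ n : Monoid.End G) : G →* G).range : Set G) ∧
      Subgroup.map (φ : G →* G) ((φ ^ n : Monoid.End G) : G →* G).range =
        ((φ ^ (n + 1) : Monoid.End G) : G →* G).range := by
  obtain ⟨n, hn⟩ := φ.exists_ker_inf_range_pow_le
  refine ⟨n, φ.finiteIndex_range_pow n, φ.finiteIndex_range_pow (n + 1), ?_, φ.map_range_pow n⟩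
  refine (Set.injOn_iff_map_eq_one φ _).2 fun x hx hφx => ?_
  exact φ.eq_one_of_forall_mem_range_pow hres (fun m => hn m ⟨hφx, hx⟩) hφx
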